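/- Let p ∈ L be divisible by u and such that z⁻ʲ·p is V-holomorphic. For m ≥ 0 let L_m := L/(u^{m+1}) and let A_m ⊆ L_m be the image of ℂ[z,u]; call an element of L_m V-holomorphic if every monomial zˢuʳ (0 ≤ r ≤ m) occurring in it satisfies s ≤ kr. Let W_m(p) := {σ = (a,b,c,d) ∈ L_m⁴ : all four entries of S_p σ = (a + zʲp·b + z⁻ʲp·c + p²·d, z²ʲ·b + zʲp·d, z⁻²ʲ·c + z⁻ʲp·d, d) are V-holomorphic}. Then the ℂ-vector spaces H⁰_m(p) := A_m⁴ ∩ W_m(p) and H¹_m(p) := L_m⁴/(A_m⁴ + W_m(p)) are finite-dimensional, and for every m ≥ 0: dim H¹_m(p) − dim H⁰_m(p) = dim H¹_m(0) − dim H⁰_m(0). (This is the statement that the holomorphic Euler characteristic of End E restricted to the m-th infinitesimal neighbourhood of the zero section is the same for the bundle determined by (j,p) and for the split bundle.) -/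

import Mathlib

noncomputable section

/-- `L = ℂ[z,z⁻¹][u]`: Laurent polynomials in `z` with polynomial coefficients in `u`,
realised as the algebra of finitely supported ℂ-linear combinations of monomials on the
exponent monoid `ℤ × ℕ`, where `(s, r)` is the exponent of the monomial `zˢuʳ`. -/
abbrev L : Type := AddMonoidAlgebra ℂ (ℤ × ℕ)

/-- The monomial `zˢ` (`s ∈ ℤ`). -/
def zp (s : ℤ) : L := AddMonoidAlgebra.single (s, 0) 1

/-- The monomial `u`. -/
def uu : L := AddMonoidAlgebra.single (0, 1) 1

/-- `f` is V-holomorphic: every monomial `zˢuʳ` occurring in `f` satisfies `s ≤ k·r`,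
i.e. `f` is holomorphic in the coordinates `(z⁻¹, zᵏu)` of the chart `V` of `Z_k`. -/
def VHol (k : ℕ) (f : L) : Prop := ∀ (s : ℤ) (r : ℕ), f.coeff (s, r) ≠ 0 → s ≤ (k : ℤ) * r

/-- `f` lies in `ℂ[z,u] ⊆ L`, i.e. is holomorphic on the chart `U`. -/
def MemPolyRing (f : L) : Prop := ∀ (s : ℤ) (r : ℕ), f.coeff (s, r) ≠ 0 → 0 ≤ s

/-- The truncation `L_m = L/(u^{m+1})`, the functions on the m-th infinitesimal
neighbourhood of the zero section (over `U ∩ V`). -/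
abbrev Lm (m : ℕ) : Type := L ⧸ Ideal.span {uu ^ (m + 1)}

/-- The quotient map `L → L_m`. -/
def mkm (m : ℕ) : L →+* Lm m := Ideal.Quotient.mk _

/-- V-holomorphy in `L_m`: every monomial `zˢuʳ` with `0 ≤ r ≤ m` occurring in it (i.e. in any
representative) satisfies `s ≤ k·r`. -/
def VHolm (k m : ℕ) (f : Lm m) : Prop :=
  ∀ g : L, mkm m g = f → ∀ (s : ℤ) (r : ℕ), r ≤ m → g.coeff (s, r) ≠ 0 → s ≤ (k : ℤ) * r

/-- `A_m ⊆ L_m`: the image of `ℂ[z,u]`. -/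
def Am (m : ℕ) : Set (Lm m) := {f | ∃ g : L, MemPolyRing g ∧ mkm m g = f}

/-- Quadruples over `L_m`, representing sections `σ = (a,b,c,d)` of `End E` over `U ∩ V`
on the m-th infinitesimal neighbourhood. -/
abbrev Q4 (m : ℕ) : Type := Lm m × Lm m × Lm m × Lm m

/-- `W_m(p)`: quadruples all four entries of whose transform
`S_p σ = (a + zʲp·b + z⁻ʲp·c + p²·d, z²ʲ·b + zʲp·d, z⁻²ʲ·c + z⁻ʲp·d, d)`
are V-holomorphic, i.e. sections of `End E` over `V` on the m-th neighbourhood. -/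
def Wm (k j m : ℕ) (p : L) : Set (Q4 m) :=
  {σ | VHolm k m (σ.1 + mkm m (zp (j : ℤ) * p) * σ.2.1
          + mkm m (zp (-(j : ℤ)) * p) * σ.2.2.1 + mkm m (p * p) * σ.2.2.2) ∧
       VHolm k m (mkm m (zp (2 * (j : ℤ))) * σ.2.1 + mkm m (zp (j : ℤ) * p) * σ.2.2.2) ∧
       VHolm k m (mkm m (zp (-(2 * (j : ℤ)))) * σ.2.2.1
          + mkm m (zp (-(j : ℤ)) * p) * σ.2.2.2) ∧
       VHolm k m σ.2.2.2}

/-- `A_m⁴ ⊆ L_m⁴`: sections of `End E` over `U` on the m-th neighbourhood. -/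
def Am4 (m : ℕ) : Set (Q4 m) := {σ | σ.1 ∈ Am m ∧ σ.2.1 ∈ Am m ∧ σ.2.2.1 ∈ Am m ∧ σ.2.2.2 ∈ Am m}

/-- `H⁰_m(p) = A_m⁴ ∩ W_m(p)` (a ℂ-subspace, realised as the span of that set). -/
def H0m (k j m : ℕ) (p : L) : Submodule ℂ (Q4 m) := Submodule.span ℂ (Am4 m ∩ Wm k j m p)

/-- `H¹_m(p) = L_m⁴ / (A_m⁴ + W_m(p))`. -/
abbrev H1m (k j m : ℕ) (p : L) : Type := Q4 m ⧸ Submodule.span ℂ (Am4 m ∪ Wm k j m p)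

/-!
Put `V = L_m⁴`, `A = A_m⁴` and `W = W_m(p)`, and let `X ⊆ V` consist of the classes supported below
the staircase `s < (r - m - 1)(km + 2j + 1)`. Then `X ⊆ W`, `X ∩ A = 0`, and `W / X` and
`V / (A + X)` are finite-dimensional, so `dim H¹ - dim H⁰ = dim V/(A + X) - dim W/X`.
The transform factors as `S_p = S_0 ∘ ψ` with `ψ` a unipotent automorphism whose coefficients
are `z^{±j}p`. These have positive `u`-order, and the staircase is steep enough that multiplying
by them keeps `X` below it; hence `ψ` preserves `X` and induces `W_m(p)/X ≅ W_m(0)/X`.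
-/

open AddMonoidAlgebra

lemma zp_mul_zp (a b : ℤ) : zp a * zp b = zp (a + b) := by
  simp [zp, single_mul_single]

lemma zp_zero : zp 0 = 1 := rfl

lemma coeff_zp_mul (e : ℤ) (f : L) (x : ℤ × ℕ) : (zp e * f).coeff x = f.coeff (x.1 - e, x.2) := by
  rw [zp, coeff_single_mul_eq_mul_coeff _ (fun c _ => ?_), one_mul]
  constructor
  · rintro rfl; simp
  · rintro rfl; ext <;> simp

lemma mem_span_uu_pow_iff {m : ℕ} {f : L} :
    f ∈ Ideal.span {uu ^ (m + 1)} ↔ ∀ x : ℤ × ℕ, x.2 ≤ m → f.coeff x = 0 := by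
  have huu : uu ^ (m + 1) = of' ℂ (ℤ × ℕ) (0, m + 1) := by
    simp [uu, of', single_pow]
  rw [huu, ← Set.image_singleton, mem_ideal_span_of'_image]
  simp only [Set.mem_singleton_iff, exists_eq_left, Finsupp.mem_support_iff]
  refine forall_congr' fun x => ⟨fun h hx => by_contra fun h0 => ?_, fun h h0 => ?_⟩
  · obtain ⟨d, rfl⟩ := h h0
    simp at hx; omega
  · refine ⟨(x.1, x.2 - (m + 1)), ?_⟩
    have : m + 1 ≤ x.2 := by by_contra hlt; exact h0 (h (by omega))
    ext <;> simp; omega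

section Truncation

variable {m : ℕ}

lemma mkm_surjective : Function.Surjective (mkm m) := Ideal.Quotient.mk_surjective

lemma mkm_eq_iff {g g' : L} :
    mkm m g = mkm m g' ↔ ∀ x : ℤ × ℕ, x.2 ≤ m → g.coeff x = g'.coeff x := by
  simp only [mkm, Ideal.Quotient.mk_eq_mk_iff_sub_mem, mem_span_uu_pow_iff, coeff_sub,
    Finsupp.sub_apply, sub_eq_zero]

lemma mkm_smul (c : ℂ) (g : L) : mkm m (c • g) = c • mkm m g :=
  map_smul (Ideal.Quotient.mkₐ ℂ _) c g

variable (m) in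
def suppIn (P : ℤ × ℕ → Prop) : Submodule ℂ (Lm m) where
  carrier := {f | ∀ g : L, mkm m g = f → ∀ x : ℤ × ℕ, x.2 ≤ m → ¬ P x → g.coeff x = 0}
  zero_mem' g hg x hx _ := by
    simpa using (mkm_eq_iff (g' := 0)).mp (by simpa using hg) x hx
  add_mem' {f₁ f₂} h₁ h₂ g hg x hx hPx := by
    obtain ⟨g₁, rfl⟩ := mkm_surjective f₁
    obtain ⟨g₂, rfl⟩ := mkm_surjective f₂
    rw [← map_add, mkm_eq_iff] at hg
    simp [hg x hx, h₁ g₁ rfl x hx hPx, h₂ g₂ rfl x hx hPx]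
  smul_mem' c f hf g hg x hx hPx := by
    obtain ⟨g₁, rfl⟩ := mkm_surjective f
    rw [← mkm_smul, mkm_eq_iff] at hg
    simp [hg x hx, hf g₁ rfl x hx hPx]

lemma mkm_mem_suppIn_iff {P : ℤ × ℕ → Prop} {g : L} :
    mkm m g ∈ suppIn m P ↔ ∀ x : ℤ × ℕ, x.2 ≤ m → ¬ P x → g.coeff x = 0 := by
  refine ⟨fun h => h g rfl, fun h g' hg' x hx hPx => ?_⟩
  rw [(mkm_eq_iff.mp hg' x hx), h x hx hPx]

end Truncation

section SupportCalculus

variable {m : ℕ} {P Q : ℤ × ℕ → Prop}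

lemma suppIn_mono (h : ∀ x : ℤ × ℕ, x.2 ≤ m → P x → Q x) : suppIn m P ≤ suppIn m Q :=
  fun _ hf g hg x hx hQ => hf g hg x hx fun hP => hQ (h x hx hP)

lemma suppIn_inf_le : suppIn m P ⊓ suppIn m Q ≤ suppIn m fun x => P x ∧ Q x := by
  rintro f ⟨hP, hQ⟩ g hg x hx hPQ
  by_cases hPx : P x
  · exact hQ g hg x hx fun hQx => hPQ ⟨hPx, hQx⟩
  · exact hP g hg x hx hPx

lemma mkm_filter_mem_suppIn [DecidablePred P] (g : L) :
    mkm m (ofCoeff (g.coeff.filter P)) ∈ suppIn m P :=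
  mkm_mem_suppIn_iff.mpr fun x _ hPx => by simp [hPx]

lemma isCompl_suppIn (P : ℤ × ℕ → Prop) : IsCompl (suppIn m P) (suppIn m fun x => ¬ P x) := by
  classical
  constructor
  · rw [Submodule.disjoint_def]
    intro f hP hnP
    obtain ⟨g, rfl⟩ := mkm_surjective f
    rw [show (0 : Lm m) = mkm m 0 from (map_zero _).symm, mkm_eq_iff]
    intro x hx
    by_cases hPx : P x
    · simpa using hnP g rfl x hx (not_not_intro hPx)
    · simpa using hP g rfl x hx hPx
  · rw [codisjoint_iff, eq_top_iff]
    intro f _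
    obtain ⟨g, rfl⟩ := mkm_surjective f
    have hsplit : g = ofCoeff (g.coeff.filter P) + ofCoeff (g.coeff.filter fun x => ¬ P x) := by
      rw [← ofCoeff_add, Finsupp.filter_add_filter_not, ofCoeff_coeff]
    rw [hsplit, map_add]
    exact Submodule.add_mem_sup (mkm_filter_mem_suppIn g) (mkm_filter_mem_suppIn g)

lemma suppIn_or_le : (suppIn m fun x => P x ∨ Q x) ≤ suppIn m P ⊔ suppIn m Q := by
  intro f hf
  obtain ⟨f₁, h₁, f₂, h₂, rfl⟩ :=
    Submodule.mem_sup.mp ((isCompl_suppIn P).codisjoint.eq_top ▸ Submodule.mem_top (x := f))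
  refine Submodule.add_mem_sup h₁
    (suppIn_mono ?_ (suppIn_inf_le (P := fun x => P x ∨ Q x) ⟨?_, h₂⟩))
  · intro x _ h; tauto
  · simpa using sub_mem hf (suppIn_mono (fun x _ h => Or.inl h) h₁)

lemma mul_mem_suppIn {R : ℤ × ℕ → Prop} {q : L} (hq : ∀ a : ℤ × ℕ, q.coeff a ≠ 0 → R a)
    (hRPQ : ∀ a b : ℤ × ℕ, R a → (a + b).2 ≤ m → P b → Q (a + b)) {f : Lm m}
    (hf : f ∈ suppIn m P) : mkm m q * f ∈ suppIn m Q := by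
  classical
  obtain ⟨g, rfl⟩ := mkm_surjective f
  rw [← map_mul, mkm_mem_suppIn_iff]
  intro x hx hQx
  by_contra hne
  obtain ⟨a, ha, b, hb, rfl⟩ :=
    Finset.mem_add.mp (support_coeff_mul_subset q g (Finsupp.mem_support_iff.mpr hne))
  have hb2 : b.2 ≤ m := le_trans (Nat.le_add_left _ _) hx
  refine hQx (hRPQ a b (hq a (Finsupp.mem_support_iff.mp ha)) hx (by_contra fun hPb => ?_))
  exact Finsupp.mem_support_iff.mp hb (mkm_mem_suppIn_iff.mp hf b hb2 hPb)

lemma finiteDimensional_suppIn {lo hi : ℤ}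
    (hP : ∀ x : ℤ × ℕ, x.2 ≤ m → P x → lo ≤ x.1 ∧ x.1 ≤ hi) :
    FiniteDimensional ℂ (suppIn m P) := by
  classical
  let box : Finset (ℤ × ℕ) := Finset.Icc lo hi ×ˢ Finset.range (m + 1)
  refine Submodule.finiteDimensional_of_le (S₂ := Submodule.span ℂ
    ↑(box.image fun x => mkm m (single x 1))) fun f hf => ?_
  obtain ⟨g, rfl⟩ := mkm_surjective f
  have hg : mkm m g = ∑ x ∈ box, g.coeff x • mkm m (single x 1) := by
    simp_rw [← mkm_smul, ← map_sum, mkm_eq_iff, coeff_sum, Finsupp.finsetSum_apply]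
    intro y hy
    simp only [coeff_smul, coeff_single, Finsupp.smul_apply, Finsupp.single_apply, smul_eq_mul,
      mul_ite, mul_one, mul_zero, Finset.sum_ite_eq']
    split_ifs with hbox
    · rfl
    by_cases hPy : P y
    · exact absurd (by simp [box, hP y hy hPy, Nat.lt_succ_of_le hy]) hbox
    · exact mkm_mem_suppIn_iff.mp hf y hy hPy
  rw [hg]
  exact Submodule.sum_mem _ fun x hx =>
    Submodule.smul_mem _ _ (Submodule.subset_span (Finset.mem_image_of_mem _ hx))

end SupportCalculus

def ConeSupported (k : ℕ) (c : ℤ) (d : ℕ) (q : L) : Prop :=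
  ∀ x : ℤ × ℕ, q.coeff x ≠ 0 → x.1 ≤ k * x.2 + c ∧ d ≤ x.2

lemma coneSupported_zp {k : ℕ} (e : ℤ) : ConeSupported k e 0 (zp e) := by
  intro x hx
  obtain rfl : x = (e, 0) := by
    by_contra hne
    exact hx (by simp [zp, AddMonoidAlgebra.coeff_single, Ne.symm hne])
  simp

lemma coneSupported_zero {k : ℕ} (c : ℤ) (d : ℕ) : ConeSupported k c d 0 :=
  fun _ hx => absurd (by simp) hx

lemma ConeSupported.mul {k : ℕ} {c₁ c₂ : ℤ} {d₁ d₂ : ℕ} {q₁ q₂ : L}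
    (h₁ : ConeSupported k c₁ d₁ q₁) (h₂ : ConeSupported k c₂ d₂ q₂) :
    ConeSupported k (c₁ + c₂) (d₁ + d₂) (q₁ * q₂) := by
  classical
  intro x hx
  obtain ⟨a, ha, b, hb, rfl⟩ :=
    Finset.mem_add.mp (support_coeff_mul_subset q₁ q₂ (Finsupp.mem_support_iff.mpr hx))
  obtain ⟨ha₁, ha₂⟩ := h₁ a (Finsupp.mem_support_iff.mp ha)
  obtain ⟨hb₁, hb₂⟩ := h₂ b (Finsupp.mem_support_iff.mp hb)
  refine ⟨?_, by simp only [Prod.snd_add]; omega⟩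
  simp only [Prod.fst_add, Prod.snd_add]; push_cast; linarith

lemma coneSupported_of_vHol {k j : ℕ} {p : L}
    (hu : ∀ (s : ℤ) (r : ℕ), p.coeff (s, r) ≠ 0 → 1 ≤ r) (hpV : VHol k (zp (-(j : ℤ)) * p)) :
    ConeSupported k j 1 p := by
  intro x hx
  have := hpV (x.1 - j) x.2 (by simpa [coeff_zp_mul] using hx)
  exact ⟨by linarith, hu x.1 x.2 hx⟩

section QuotientIndex

open Submodule Module

variable {K V : Type*} [Field K] [AddCommGroup V] [Module K V]

theorem finrank_quotient_sup_add_finrank (A W : Submodule K V) [FiniteDimensional K W]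
    [FiniteDimensional K (V ⧸ A)] :
    finrank K (V ⧸ (A ⊔ W)) + finrank K W = finrank K (V ⧸ A) + finrank K ↥(A ⊓ W) := by
  set ρ : W →ₗ[K] V ⧸ A := A.mkQ ∘ₗ W.subtype
  have hrange : LinearMap.range ρ = W.map A.mkQ := by
    rw [LinearMap.range_comp, range_subtype]
  have hker : finrank K (LinearMap.ker ρ) = finrank K ↥(A ⊓ W) := by
    have : LinearMap.ker ρ = (A ⊓ W).comap W.subtype := by
      ext w; simp [ρ]
    rw [this]
    exact (comapSubtypeEquivOfLe inf_le_right).finrank_eq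
  have hquot := (quotientQuotientEquivQuotientSup A W).finrank_eq
  rw [← hrange] at hquot
  have := finrank_quotient_add_finrank (LinearMap.range ρ)
  have := LinearMap.finrank_range_add_finrank_ker ρ
  omega

theorem map_mkQ_inf_map_mkQ {X A W : Submodule K V} (hXW : X ≤ W) :
    A.map X.mkQ ⊓ W.map X.mkQ = (A ⊓ W).map X.mkQ := by
  refine le_antisymm ?_ (map_inf_le _)
  rintro _ ⟨⟨a, ha, rfl⟩, ⟨w, hw, hwa⟩⟩
  have haw : a - w ∈ X := by
    rw [← Submodule.Quotient.eq]; exact hwa.symm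
  refine ⟨a, ⟨ha, ?_⟩, rfl⟩
  simpa using add_mem (hXW haw) hw

theorem injective_mkQ_comp_subtype_of_disjoint {X A : Submodule K V} (hAX : Disjoint A X) :
    Function.Injective (X.mkQ ∘ₗ A.subtype) := by
  rw [← LinearMap.ker_eq_bot, eq_bot_iff]
  intro a ha
  simpa using disjoint_def.mp hAX a a.2 (by simpa using ha)

theorem finrank_quotient_sup_add_finrank_map_mkQ {X A W : Submodule K V} (hXW : X ≤ W)
    (hAX : Disjoint A X) [FiniteDimensional K (W.map X.mkQ)]
    [FiniteDimensional K (V ⧸ (A ⊔ X))] :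
    FiniteDimensional K ↥(A ⊓ W) ∧ FiniteDimensional K (V ⧸ (A ⊔ W)) ∧
      finrank K (V ⧸ (A ⊔ W)) + finrank K (W.map X.mkQ)
        = finrank K (V ⧸ (A ⊔ X)) + finrank K ↥(A ⊓ W) := by
  have eAX : ((V ⧸ X) ⧸ A.map X.mkQ) ≃ₗ[K] V ⧸ (A ⊔ X) :=
    (quotientQuotientEquivQuotientSup X A).trans (quotEquivOfEq _ _ (sup_comm _ _))
  have eAW : ((V ⧸ X) ⧸ (A.map X.mkQ ⊔ W.map X.mkQ)) ≃ₗ[K] V ⧸ (A ⊔ W) :=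
    (quotEquivOfEq _ _ (map_sup A W X.mkQ).symm).trans
      ((quotientQuotientEquivQuotientSup X (A ⊔ W)).trans
        (quotEquivOfEq _ _ (sup_eq_right.mpr (hXW.trans le_sup_right))))
  have : FiniteDimensional K ((V ⧸ X) ⧸ A.map X.mkQ) := Module.Finite.equiv eAX.symm
  have : FiniteDimensional K ((V ⧸ X) ⧸ (A.map X.mkQ ⊔ W.map X.mkQ)) :=
    Module.Finite.equiv (quotientQuotientEquivQuotientSup _ _)
  have eInf : ↥(A ⊓ W) ≃ₗ[K] ↥(A.map X.mkQ ⊓ W.map X.mkQ) :=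
    (LinearEquiv.ofInjective _
      (injective_mkQ_comp_subtype_of_disjoint (hAX.mono_left inf_le_left))).trans
      (LinearEquiv.ofEq _ _ (by rw [LinearMap.range_comp, range_subtype, map_mkQ_inf_map_mkQ hXW]))
  have : FiniteDimensional K ↥(A.map X.mkQ ⊓ W.map X.mkQ) :=
    Submodule.finiteDimensional_of_le inf_le_right
  refine ⟨Module.Finite.equiv eInf.symm, Module.Finite.equiv eAW, ?_⟩
  rw [← eAW.finrank_eq, ← eAX.finrank_eq, eInf.finrank_eq,
    finrank_quotient_sup_add_finrank (A.map X.mkQ) (W.map X.mkQ)]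

theorem map_quotientEquiv_map_mkQ {X W W' : Submodule K V} (φ : V ≃ₗ[K] V)
    (hX : X.map (φ : V →ₗ[K] V) = X) (hW : W.map (φ : V →ₗ[K] V) = W') :
    (W.map X.mkQ).map (Quotient.equiv X X φ hX : (V ⧸ X) →ₗ[K] V ⧸ X) = W'.map X.mkQ := by
  rw [← hW, ← map_comp, ← map_comp]
  congr 1

noncomputable def mapMkQEquivOfMapEq {X W W' : Submodule K V} (φ : V ≃ₗ[K] V)
    (hX : X.map (φ : V →ₗ[K] V) = X) (hW : W.map (φ : V →ₗ[K] V) = W') :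
    W.map X.mkQ ≃ₗ[K] W'.map X.mkQ :=
  ((Quotient.equiv X X φ hX).submoduleMap _).trans
    (LinearEquiv.ofEq _ _ (map_quotientEquiv_map_mkQ φ hX hW))

theorem finiteDimensional_quotient_of_sup_eq_top {N M : Submodule K V} (h : N ⊔ M = ⊤)
    [FiniteDimensional K M] : FiniteDimensional K (V ⧸ N) :=
  Module.Finite.of_surjective (N.mkQ ∘ₗ M.subtype) <| LinearMap.range_eq_top.mp <| by
    rwa [LinearMap.range_comp, range_subtype, map_mkQ_eq_top]

theorem finiteDimensional_map_mkQ_of_le_sup {X W M : Submodule K V} (h : W ≤ X ⊔ M)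
    [FiniteDimensional K M] : FiniteDimensional K (W.map X.mkQ) :=
  Submodule.finiteDimensional_of_le <| (map_mono h).trans_eq <| by
    rw [Submodule.map_sup, mkQ_map_self, bot_sup_eq]

end QuotientIndex

section Quadruples

open Submodule

variable {K M : Type*} [CommSemiring K] [AddCommMonoid M] [Module K M]

def quad (S : Submodule K M) : Submodule K (M × M × M × M) := S.prod (S.prod (S.prod S))

@[simp] lemma mem_quad {S : Submodule K M} {σ : M × M × M × M} :
    σ ∈ quad S ↔ σ.1 ∈ S ∧ σ.2.1 ∈ S ∧ σ.2.2.1 ∈ S ∧ σ.2.2.2 ∈ S := by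
  simp [quad, mem_prod]

lemma quad_sup (S T : Submodule K M) : quad (S ⊔ T) = quad S ⊔ quad T := by
  simp only [quad, prod_sup_prod]

lemma quad_top : quad (⊤ : Submodule K M) = ⊤ := by
  simp only [quad, prod_top]

lemma disjoint_quad {S T : Submodule K M} (h : Disjoint S T) : Disjoint (quad S) (quad T) := by
  simp only [disjoint_iff, quad, prod_inf_prod, h.eq_bot, prod_bot]

instance {K M N : Type*} [Field K] [AddCommGroup M] [Module K M] [AddCommGroup N] [Module K N]
    (S : Submodule K M) (T : Submodule K N) [FiniteDimensional K S] [FiniteDimensional K T] :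
    FiniteDimensional K (S.prod T) := by
  rw [LinearMap.prod_eq_sup_map]; infer_instance

instance {K M : Type*} [Field K] [AddCommGroup M] [Module K M] (S : Submodule K M)
    [FiniteDimensional K S] : FiniteDimensional K (quad S) := by
  unfold quad; infer_instance

end Quadruples

section Unipotent

open Submodule

variable {K R : Type*} [CommRing K] [CommRing R] [Algebra K R]

def unipotent (A B : R) : (R × R × R × R) ≃ₗ[K] (R × R × R × R) where
  toFun σ := (σ.1 + A * σ.2.1 + B * σ.2.2.1 + A * B * σ.2.2.2, σ.2.1 + B * σ.2.2.2,
    σ.2.2.1 + A * σ.2.2.2, σ.2.2.2)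
  invFun σ := (σ.1 - A * σ.2.1 - B * σ.2.2.1 + A * B * σ.2.2.2, σ.2.1 - B * σ.2.2.2,
    σ.2.2.1 - A * σ.2.2.2, σ.2.2.2)
  map_add' σ τ := by ext <;> simp <;> ring
  map_smul' c σ := by ext <;> simp
  left_inv σ := by ext <;> simp; ring
  right_inv σ := by ext <;> simp; ring

@[simp] lemma unipotent_apply (A B : R) (σ : R × R × R × R) :
    unipotent (K := K) A B σ = (σ.1 + A * σ.2.1 + B * σ.2.2.1 + A * B * σ.2.2.2,
      σ.2.1 + B * σ.2.2.2, σ.2.2.1 + A * σ.2.2.2, σ.2.2.2) := rfl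

@[simp] lemma unipotent_symm_apply (A B : R) (σ : R × R × R × R) :
    (unipotent (K := K) A B).symm σ = (σ.1 - A * σ.2.1 - B * σ.2.2.1 + A * B * σ.2.2.2,
      σ.2.1 - B * σ.2.2.2, σ.2.2.1 - A * σ.2.2.2, σ.2.2.2) := rfl

lemma map_unipotent_quad {A B : R} {S : Submodule K R} (hA : ∀ f ∈ S, A * f ∈ S)
    (hB : ∀ f ∈ S, B * f ∈ S) :
    (quad S).map ((unipotent A B : (R × R × R × R) ≃ₗ[K] _) : (R × R × R × R) →ₗ[K] _)
      = quad S := by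
  have hAB : ∀ f ∈ S, A * B * f ∈ S := fun f hf => mul_assoc A B f ▸ hA _ (hB f hf)
  refine le_antisymm (map_le_iff_le_comap.mpr fun σ hσ => ?_) fun σ hσ => ?_
  · simp only [mem_quad] at hσ
    simp only [mem_comap, LinearEquiv.coe_coe, unipotent_apply, mem_quad]
    exact ⟨add_mem (add_mem (add_mem hσ.1 (hA _ hσ.2.1)) (hB _ hσ.2.2.1)) (hAB _ hσ.2.2.2),
      add_mem hσ.2.1 (hB _ hσ.2.2.2), add_mem hσ.2.2.1 (hA _ hσ.2.2.2), hσ.2.2.2⟩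
  · refine ⟨(unipotent A B).symm σ, ?_, (unipotent A B).apply_symm_apply σ⟩
    simp only [mem_quad] at hσ
    simp only [unipotent_symm_apply]
    exact ⟨add_mem (sub_mem (sub_mem hσ.1 (hA _ hσ.2.1)) (hB _ hσ.2.2.1)) (hAB _ hσ.2.2.2),
      sub_mem hσ.2.1 (hB _ hσ.2.2.2), sub_mem hσ.2.2.1 (hA _ hσ.2.2.2), hσ.2.2.2⟩

end Unipotent

section Regions

variable (k j m : ℕ)

/-- Exceeds `s` for every monomial `zˢuʳ` with `r ≤ m` of a coefficient of `S_p`. -/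
def stairStep : ℤ := k * m + 2 * j + 1

def stair (r : ℕ) : ℤ := ((r : ℤ) - (m + 1)) * stairStep k j m

def holV (c : ℤ) : Submodule ℂ (Lm m) := suppIn m fun x => x.1 ≤ k * x.2 + c

def polyU : Submodule ℂ (Lm m) := suppIn m fun x => 0 ≤ x.1

def deep : Submodule ℂ (Lm m) := suppIn m fun x => x.1 < stair k j m x.2

def shallow : Submodule ℂ (Lm m) := suppIn m fun x => ¬ x.1 < stair k j m x.2

def window : Submodule ℂ (Lm m) :=
  suppIn m fun x => stair k j m x.2 ≤ x.1 ∧ x.1 ≤ k * x.2 + 2 * j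

variable {k j m}

lemma stairStep_pos : 0 < stairStep k j m := by unfold stairStep; positivity

lemma stair_le_neg_stairStep {r : ℕ} (hr : r ≤ m) : stair k j m r ≤ -stairStep k j m := by
  have : (r : ℤ) - (m + 1) ≤ -1 := by omega
  unfold stair; nlinarith [stairStep_pos (k := k) (j := j) (m := m)]

lemma stair_add_stairStep_le {r r' : ℕ} (h : r < r') :
    stair k j m r + stairStep k j m ≤ stair k j m r' := by
  have : (r : ℤ) + 1 ≤ r' := by omega
  unfold stair; nlinarith [stairStep_pos (k := k) (j := j) (m := m)]

lemma stair_zero_le (r : ℕ) : stair k j m 0 ≤ stair k j m r := by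
  unfold stair
  gcongr
  · exact stairStep_pos.le
  · simp

lemma lt_stairStep_of_le_cone {x : ℤ × ℕ} {c : ℤ} (hx : x.2 ≤ m) (hc : c ≤ 2 * j)
    (h : x.1 ≤ k * x.2 + c) : x.1 < stairStep k j m := by
  have : (k : ℤ) * x.2 ≤ k * m := by gcongr
  unfold stairStep; linarith

lemma holV_mono {c c' : ℤ} (h : c ≤ c') : holV k m c ≤ holV k m c' :=
  suppIn_mono fun _ _ hx => by linarith

lemma mul_mem_holV {q : L} {c c' : ℤ} {d : ℕ} (hq : ConeSupported k c d q) {f : Lm m}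
    (hf : f ∈ holV k m c') : mkm m q * f ∈ holV k m (c + c') :=
  mul_mem_suppIn hq (fun a b ha _ hb => by
    simp only [Prod.fst_add, Prod.snd_add]; push_cast; linarith [ha.1]) hf

lemma mul_deep_mem_holV {q : L} {c : ℤ} {d : ℕ} (hq : ConeSupported k c d q) (hc : c ≤ 2 * j)
    {f : Lm m} (hf : f ∈ deep k j m) : mkm m q * f ∈ holV k m 0 := by
  refine mul_mem_suppIn hq (fun a b ha hab hb => ?_) hf
  have hb' := stair_le_neg_stairStep (k := k) (j := j) (le_trans (Nat.le_add_left _ _) hab)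
  have ha' := lt_stairStep_of_le_cone (le_trans (Nat.le_add_right _ _) hab) hc ha.1
  have : (0 : ℤ) ≤ k * (a + b).2 := by positivity
  simp only [Prod.fst_add] at *; linarith

lemma mul_mem_deep {q : L} {c : ℤ} (hq : ConeSupported k c 1 q) (hc : c ≤ 2 * j)
    {f : Lm m} (hf : f ∈ deep k j m) : mkm m q * f ∈ deep k j m := by
  refine mul_mem_suppIn hq (fun a b ha hab hb => ?_) hf
  have ha' := lt_stairStep_of_le_cone (le_trans (Nat.le_add_right _ _) hab) hc ha.1
  have := stair_add_stairStep_le (k := k) (j := j) (m := m) (r := b.2) (r' := (a + b).2)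
    (by simp only [Prod.snd_add]; omega)
  simp only [Prod.fst_add] at *; linarith

lemma deep_le_holV : deep k j m ≤ holV k m 0 :=
  suppIn_mono fun x hx h => by
    have := stair_le_neg_stairStep (k := k) (j := j) hx
    have : (0 : ℤ) ≤ k * x.2 := by positivity
    linarith [stairStep_pos (k := k) (j := j) (m := m)]

lemma isCompl_deep_shallow : IsCompl (deep k j m) (shallow k j m) := isCompl_suppIn _

lemma polyU_le_shallow : polyU m ≤ shallow k j m :=
  suppIn_mono fun x hx h => by
    linarith [stair_le_neg_stairStep (k := k) (j := j) hx, stairStep_pos (k := k) (j := j) (m := m)]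

lemma shallow_le_window_sup_polyU : shallow k j m ≤ window k j m ⊔ polyU m := by
  refine le_trans (suppIn_mono fun x _ h => ?_) suppIn_or_le
  have : (0 : ℤ) ≤ k * x.2 := by positivity
  by_cases h0 : 0 ≤ x.1
  · exact Or.inr h0
  · exact Or.inl ⟨not_lt.mp h, by linarith⟩

lemma shallow_inf_holV_le_window : shallow k j m ⊓ holV k m (2 * j) ≤ window k j m :=
  le_trans suppIn_inf_le (suppIn_mono fun _ _ h => ⟨not_lt.mp h.1, h.2⟩)

instance : FiniteDimensional ℂ (window k j m) :=
  finiteDimensional_suppIn (lo := stair k j m 0) (hi := k * m + 2 * j) fun x hx h =>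
    ⟨(stair_zero_le x.2).trans h.1, by
      have : (k : ℤ) * x.2 ≤ k * m := by gcongr
      linarith [h.2]⟩

end Regions

section Sections

open Submodule

variable {k j m : ℕ}

lemma vHolm_iff {f : Lm m} : VHolm k m f ↔ f ∈ holV k m 0 :=
  ⟨fun h g hg x hx hlt => by_contra fun hne => hlt (by simpa using h g hg x.1 x.2 hx hne),
    fun h g hg s r hr hne => by_contra fun hlt => hne (h g hg (s, r) hr (by simpa using hlt))⟩

lemma am_eq : Am m = polyU m := by
  classical
  ext f
  refine ⟨fun ⟨g, hg, hgf⟩ => hgf ▸ mkm_mem_suppIn_iff.mpr fun x _ hx => ?_, fun hf => ?_⟩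
  · exact by_contra fun h => hx (hg x.1 x.2 h)
  · obtain ⟨g, rfl⟩ := mkm_surjective f
    refine ⟨ofCoeff (g.coeff.filter fun x => 0 ≤ x.1), fun s r h => ?_,
      mkm_eq_iff.mpr fun x hx => ?_⟩
    · by_contra hs; simp [hs] at h
    · by_cases hx0 : 0 ≤ x.1
      · simp [hx0]
      · simp [hx0, mkm_mem_suppIn_iff.mp hf x hx hx0]

variable (k j m) in
def splitSections : Submodule ℂ (Q4 m) :=
  (holV k m 0).prod (((holV k m 0).comap (LinearMap.mulLeft ℂ (mkm m (zp (2 * j))))).prod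
    (((holV k m 0).comap (LinearMap.mulLeft ℂ (mkm m (zp (-(2 * j)))))).prod (holV k m 0)))

lemma mem_splitSections {σ : Q4 m} :
    σ ∈ splitSections k j m ↔ σ.1 ∈ holV k m 0 ∧ mkm m (zp (2 * j)) * σ.2.1 ∈ holV k m 0 ∧
      mkm m (zp (-(2 * j))) * σ.2.2.1 ∈ holV k m 0 ∧ σ.2.2.2 ∈ holV k m 0 := by
  simp [splitSections, mem_prod]

variable (j m) in
def unipotentFactor (p : L) : Q4 m ≃ₗ[ℂ] Q4 m := unipotent (mkm m (zp j * p)) (mkm m (zp (-j) * p))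

variable (k j m) in
def sectionsV (p : L) : Submodule ℂ (Q4 m) :=
  (splitSections k j m).comap (unipotentFactor j m p : Q4 m →ₗ[ℂ] Q4 m)

lemma mkm_zp_mul_zp_mul {a b : ℤ} {p : L} (f : Lm m) :
    mkm m (zp a) * (mkm m (zp b * p) * f) = mkm m (zp (a + b) * p) * f := by
  rw [← mul_assoc, ← map_mul, ← mul_assoc, zp_mul_zp]

lemma wm_eq (p : L) : Wm k j m p = sectionsV k j m p := by
  have hpp : mkm m (p * p) = mkm m (zp j * p) * mkm m (zp (-j) * p) := by
    rw [← map_mul, mul_mul_mul_comm, zp_mul_zp, add_neg_cancel, zp_zero, one_mul]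
  ext σ
  simp only [Wm, Set.mem_ofPred_eq, vHolm_iff, SetLike.mem_coe, sectionsV, unipotentFactor,
    mem_comap, LinearEquiv.coe_coe, unipotent_apply, mem_splitSections, mul_add,
    mkm_zp_mul_zp_mul, hpp]
  rw [show 2 * (j : ℤ) + -j = j by ring, show -(2 * (j : ℤ)) + j = -j by ring]

lemma quad_deep_le_splitSections : quad (deep k j m) ≤ splitSections k j m := by
  intro σ hσ
  simp only [mem_quad] at hσ
  rw [mem_splitSections]
  exact ⟨deep_le_holV hσ.1, mul_deep_mem_holV (coneSupported_zp _) le_rfl hσ.2.1,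
    mul_deep_mem_holV (coneSupported_zp _) (by omega) hσ.2.2.1, deep_le_holV hσ.2.2.2⟩

lemma mem_deep_sup_window {e : ℤ} (he : e ≤ 2 * j) (he' : -e ≤ 2 * j) {f : Lm m}
    (hf : mkm m (zp e) * f ∈ holV k m 0) : f ∈ deep k j m ⊔ window k j m := by
  obtain ⟨x, hx, y, hy, rfl⟩ :=
    mem_sup.mp (isCompl_deep_shallow.codisjoint.eq_top ▸ mem_top (x := f))
  have hey : mkm m (zp e) * y ∈ holV k m 0 := by
    simpa [mul_add] using sub_mem hf (mul_deep_mem_holV (coneSupported_zp e) he hx)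
  have hy' : y ∈ holV k m (2 * j) := by
    have := mul_mem_holV (coneSupported_zp (-e)) hey
    rw [← mul_assoc, ← map_mul, zp_mul_zp, neg_add_cancel, zp_zero, map_one, one_mul] at this
    exact holV_mono (by omega) this
  exact add_mem_sup hx (shallow_inf_holV_le_window ⟨hy, hy'⟩)

lemma splitSections_le : splitSections k j m ≤ quad (deep k j m) ⊔ quad (window k j m) := by
  intro σ hσ
  rw [mem_splitSections] at hσ
  rw [← quad_sup, mem_quad]
  have h₀ : ∀ {f : Lm m}, f ∈ holV k m 0 → f ∈ deep k j m ⊔ window k j m := fun hf =>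
    mem_deep_sup_window (e := 0) (by omega) (by omega) (by rwa [zp_zero, map_one, one_mul])
  exact ⟨h₀ hσ.1, mem_deep_sup_window le_rfl (by omega) hσ.2.1,
    mem_deep_sup_window (by omega) (by omega) hσ.2.2.1, h₀ hσ.2.2.2⟩

lemma map_unipotentFactor_quad_deep {p : L} (hp : ConeSupported k j 1 p) :
    (quad (deep k j m)).map (unipotentFactor j m p : Q4 m →ₗ[ℂ] Q4 m) = quad (deep k j m) :=
  map_unipotent_quad (fun _ => mul_mem_deep ((coneSupported_zp _).mul hp) (by omega))
    (fun _ => mul_mem_deep ((coneSupported_zp _).mul hp) (by omega))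

lemma quad_deep_le_sectionsV {p : L} (hp : ConeSupported k j 1 p) :
    quad (deep k j m) ≤ sectionsV k j m p :=
  map_le_iff_le_comap.mp ((map_unipotentFactor_quad_deep hp).trans_le quad_deep_le_splitSections)

lemma map_unipotentFactor_sectionsV (p : L) :
    (sectionsV k j m p).map (unipotentFactor j m p : Q4 m →ₗ[ℂ] Q4 m) = splitSections k j m :=
  map_comap_eq_of_surjective (LinearEquiv.surjective _) _

lemma polyU_sup_deep_sup_window :
    quad (polyU m) ⊔ quad (deep k j m) ⊔ quad (window k j m) = ⊤ := by
  rw [← quad_sup, ← quad_sup, ← quad_top]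
  refine congrArg quad (eq_top_iff.mpr ?_)
  calc ⊤ = deep k j m ⊔ shallow k j m := isCompl_deep_shallow.sup_eq_top.symm
    _ ≤ _ := sup_le (le_sup_of_le_left le_sup_right)
        (shallow_le_window_sup_polyU.trans (sup_le le_sup_right (le_sup_of_le_left le_sup_left)))

lemma disjoint_polyU_deep : Disjoint (quad (polyU m)) (quad (deep k j m)) :=
  disjoint_quad (isCompl_deep_shallow.disjoint.symm.mono_left polyU_le_shallow)

end Sections

section Index

open Submodule Module

variable {k j m : ℕ}

lemma am4_eq : Am4 m = quad (polyU m) := by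
  ext σ; simp [Am4, am_eq]

lemma h0m_eq (p : L) : H0m k j m p = quad (polyU m) ⊓ sectionsV k j m p := by
  rw [H0m, am4_eq, wm_eq, ← coe_inf, span_eq]

lemma span_am4_union_wm (p : L) :
    span ℂ (Am4 m ∪ Wm k j m p) = quad (polyU m) ⊔ sectionsV k j m p := by
  rw [am4_eq, wm_eq, span_union, span_eq, span_eq]

theorem finrank_h1m_add_finrank_eq {p : L} (hp : ConeSupported k j 1 p) :
    FiniteDimensional ℂ (H0m k j m p) ∧ FiniteDimensional ℂ (H1m k j m p) ∧
      finrank ℂ (H1m k j m p) + finrank ℂ ((splitSections k j m).map (quad (deep k j m)).mkQ)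
        = finrank ℂ (Q4 m ⧸ (quad (polyU m) ⊔ quad (deep k j m))) + finrank ℂ (H0m k j m p) := by
  have : FiniteDimensional ℂ ((splitSections k j m).map (quad (deep k j m)).mkQ) :=
    finiteDimensional_map_mkQ_of_le_sup splitSections_le
  let e := mapMkQEquivOfMapEq _ (map_unipotentFactor_quad_deep (m := m) hp)
    (map_unipotentFactor_sectionsV (k := k) p)
  have : FiniteDimensional ℂ ((sectionsV k j m p).map (quad (deep k j m)).mkQ) :=
    Module.Finite.equiv e.symm
  have : FiniteDimensional ℂ (Q4 m ⧸ (quad (polyU m) ⊔ quad (deep k j m))) :=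
    finiteDimensional_quotient_of_sup_eq_top polyU_sup_deep_sup_window
  unfold H1m
  rw [h0m_eq, span_am4_union_wm, ← e.finrank_eq]
  exact finrank_quotient_sup_add_finrank_map_mkQ (quad_deep_le_sectionsV hp) disjoint_polyU_deep

end Index

theorem endE_euler_char_eq_split_general (k : ℕ) (j : ℕ) (p : L)
    (hu : ∀ (s : ℤ) (r : ℕ), p.coeff (s, r) ≠ 0 → 1 ≤ r)
    (hpV : VHol k (zp (-(j : ℤ)) * p)) (m : ℕ) :
    FiniteDimensional ℂ (H0m k j m p) ∧ FiniteDimensional ℂ (H1m k j m p) ∧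
    FiniteDimensional ℂ (H0m k j m 0) ∧ FiniteDimensional ℂ (H1m k j m 0) ∧
    (Module.finrank ℂ (H1m k j m p) : ℤ) - Module.finrank ℂ (H0m k j m p)
      = (Module.finrank ℂ (H1m k j m 0) : ℤ) - Module.finrank ℂ (H0m k j m 0) := by
  obtain ⟨h0p, h1p, hp⟩ := finrank_h1m_add_finrank_eq (m := m) (coneSupported_of_vHol hu hpV)
  obtain ⟨h00, h10, h0⟩ := finrank_h1m_add_finrank_eq (m := m) (coneSupported_zero (k := k) j 1)
  exact ⟨h0p, h1p, h00, h10, by omega⟩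

/-- For `p ∈ L` divisible by `u` with `z⁻ʲp` V-holomorphic, the spaces
`H⁰_m(p)` and `H¹_m(p)` are finite-dimensional, and for every `m` the Euler characteristic
`dim H¹_m(p) − dim H⁰_m(p)` equals the one of the split bundle, `dim H¹_m(0) − dim H⁰_m(0)`. -/
theorem endE_euler_char_eq_split (k : ℕ) (hk : 1 ≤ k) (j : ℕ) (p : L)
    (hu : ∀ (s : ℤ) (r : ℕ), p.coeff (s, r) ≠ 0 → 1 ≤ r)
    (hpV : VHol k (zp (-(j : ℤ)) * p)) (m : ℕ) :
    FiniteDimensional ℂ (H0m k j m p) ∧ FiniteDimensional ℂ (H1m k j m p) ∧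
    FiniteDimensional ℂ (H0m k j m 0) ∧ FiniteDimensional ℂ (H1m k j m 0) ∧
    (Module.finrank ℂ (H1m k j m p) : ℤ) - Module.finrank ℂ (H0m k j m p)
      = (Module.finrank ℂ (H1m k j m 0) : ℤ) - Module.finrank ℂ (H0m k j m 0) :=
  endE_euler_char_eq_split_general k j p hu hpV m
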